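/- For integers k ≥ 1 and 1 ≤ m ≤ k, let y_m = 1 / (1 + (1 − 2/(2k+1))^{2m−2}) and μ_m = 1/2 − 1/(4k) + y_m/(2k). Then 1/2 ≤ μ_m ≤ 1/2 + 1/(5k). -/

import Mathlib

/-!
Write `q = 1 - 2/(2k+1) = (2k-1)/(2k+1) ∈ (0, 1)`. Then `y_m = 1/(1 + q^(2m-2)) ≥ 1/2`, which gives
`μ_m ≥ 1/2`. Conversely `q^(2m-2) ≥ q^(2k-1) = (1 + 2/(2k-1))^(-(2k-1)) ≥ e^(-2) > 1/9`,
so `y_m ≤ 9/10`, and `μ_m ≤ 1/2 - 1/(4k) + 9/(20k) = 1/2 + 1/(5k)`.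
-/

noncomputable section

/-- `y_m = 1 / (1 + (1 - 2/(2k+1))^(2m-2))`. -/
def yk (k m : ℕ) : ℝ := 1 / (1 + (1 - 2/(2*(k:ℝ) + 1)) ^ (2*m - 2))

/-- `μ_m = 1/2 - 1/(4k) + y_m/(2k)`, the prior of the information structure `I(m)`. -/
def muk (k m : ℕ) : ℝ := 1/2 - 1/(4*(k:ℝ)) + yk k m / (2*(k:ℝ))

lemma Real.exp_neg_le_div_add_pow (n : ℕ) {t : ℝ} (ht : 0 ≤ t) :
    Real.exp (-t) ≤ ((n : ℝ) / (n + t)) ^ n := by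
  rcases n.eq_zero_or_pos with rfl | hn
  · simpa using ht
  have hn' : (0 : ℝ) < n := by exact_mod_cast hn
  have hbound : (1 + t / n) ^ n ≤ Real.exp t := by
    simpa [sub_eq_add_neg, neg_div] using
      Real.one_sub_div_pow_le_exp_neg (n := n) (t := -t) (by linarith)
  have hinv : (n : ℝ) / (n + t) = (1 + t / n)⁻¹ := by field_simp
  rw [hinv, inv_pow, Real.exp_neg]
  gcongr

lemma Real.exp_two_lt_nine : Real.exp 2 < 9 := by
  have h : Real.exp 2 = Real.exp 1 ^ 2 := by rw [← Real.exp_nat_mul]; norm_num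
  rw [h]
  nlinarith [Real.exp_one_lt_d9, Real.exp_pos 1]

lemma one_sub_two_div_eq (k : ℕ) (hk : 1 ≤ k) :
    1 - 2 / (2 * (k : ℝ) + 1) = ((2 * k - 1 : ℕ) : ℝ) / ((2 * k - 1 : ℕ) + 2) := by
  have hcast : ((2 * k - 1 : ℕ) : ℝ) = 2 * k - 1 := by
    rw [Nat.cast_sub (by omega)]
    push_cast
    ring
  rw [hcast, show (2 * k - 1 : ℝ) + 2 = 2 * k + 1 by ring]
  field_simp
  ring

lemma exp_neg_two_le_one_sub_two_div_pow {k j : ℕ} (hk : 1 ≤ k) (hj : j ≤ 2 * k - 1) :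
    Real.exp (-2) ≤ (1 - 2 / (2 * (k : ℝ) + 1)) ^ j := by
  rw [one_sub_two_div_eq k hk]
  calc Real.exp (-2)
      ≤ (((2 * k - 1 : ℕ) : ℝ) / ((2 * k - 1 : ℕ) + 2)) ^ (2 * k - 1) :=
        Real.exp_neg_le_div_add_pow _ zero_le_two
    _ ≤ (((2 * k - 1 : ℕ) : ℝ) / ((2 * k - 1 : ℕ) + 2)) ^ j :=
        pow_le_pow_of_le_one (by positivity) (div_le_one_of_le₀ (by linarith) (by positivity)) hj

lemma half_le_yk {k : ℕ} (hk : 1 ≤ k) (m : ℕ) : 1 / 2 ≤ yk k m := by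
  have hk' : (1 : ℝ) ≤ k := by exact_mod_cast hk
  have hq0 : 0 ≤ 1 - 2 / (2 * (k : ℝ) + 1) := by
    rw [sub_nonneg, div_le_one (by positivity)]
    linarith
  have hq1 : 1 - 2 / (2 * (k : ℝ) + 1) ≤ 1 := by
    have : 0 ≤ 2 / (2 * (k : ℝ) + 1) := by positivity
    linarith
  unfold yk
  gcongr
  linarith [pow_le_one₀ (n := 2 * m - 2) hq0 hq1]

lemma yk_le_nine_tenths {k m : ℕ} (hk : 1 ≤ k) (hmk : m ≤ k) : yk k m ≤ 9 / 10 := by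
  have hq : 1 / 9 ≤ (1 - 2 / (2 * (k : ℝ) + 1)) ^ (2 * m - 2) := by
    have h := exp_neg_two_le_one_sub_two_div_pow (j := 2 * m - 2) hk (by omega)
    rw [Real.exp_neg] at h
    refine le_trans ?_ h
    rw [one_div]
    exact inv_anti₀ (Real.exp_pos 2) Real.exp_two_lt_nine.le
  unfold yk
  rw [div_le_div_iff₀ (by positivity) (by norm_num)]
  linarith

theorem stmt_12_general (k m : ℕ) (hk : 1 ≤ k) (hmk : m ≤ k) :
    1/2 ≤ muk k m ∧ muk k m ≤ 1/2 + 1/(5*(k:ℝ)) := by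
  have hk' : (0 : ℝ) < k := by exact_mod_cast hk
  have hlow := half_le_yk hk m
  have hhigh := yk_le_nine_tenths hk hmk
  unfold muk
  constructor
  · calc (1 : ℝ) / 2 = 1 / 2 - 1 / (4 * k) + (1 / 2) / (2 * k) := by field_simp; ring
      _ ≤ _ := by gcongr
  · calc _ ≤ 1 / 2 - 1 / (4 * (k : ℝ)) + (9 / 10) / (2 * k) := by gcongr
      _ = 1 / 2 + 1 / (5 * k) := by field_simp; ring

theorem stmt_12 (k m : ℕ) (hk : 1 ≤ k) (hm : 1 ≤ m) (hmk : m ≤ k) :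
    1/2 ≤ muk k m ∧ muk k m ≤ 1/2 + 1/(5*(k:ℝ)) :=
  stmt_12_general k m hk hmk
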